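/- Let C₀ be a conjugation on a finite-dimensional space K₀ and C₁ a conjugation on a Hilbert space K₁. Let A, B, G be bounded operators with A ∈ B(K₁), B ∈ B(K₀), C₀BC₀ = B*, and G : K₀ → K₁ with C₁AC₁ = A. Then the operator W = [[A*, G, 0], [0, B, C₀G*C₁], [0, 0, A]] on K₁ ⊕ K₀ ⊕ K₁ is complex symmetric with respect to the conjugation J(x, y, z) = (C₁z, C₀y, C₁x). -/

import Mathlib

noncomputable section

/-- A conjugation on a complex inner product space: a conjugate-linear involution
satisfying `⟪Cx, Cy⟫ = ⟪y, x⟫`. -/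
def IsConjugation {H : Type*} [NormedAddCommGroup H] [InnerProductSpace ℂ H]
    (C : H → H) : Prop :=
  (∀ x y : H, C (x + y) = C x + C y) ∧
  (∀ (a : ℂ) (x : H), C (a • x) = (starRingEnd ℂ) a • C x) ∧
  (∀ x : H, C (C x) = x) ∧
  (∀ x y : H, (inner ℂ (C x) (C y) : ℂ) = inner ℂ y x)


/-!
`W` is block upper triangular, so its adjoint is block lower triangular with the adjoint entries
in transposed position. Conjugating by `J` reverses the order of the three blocks and replaces each
entry `T` by `C T C`; the hypotheses `C₁AC₁ = A` (hence also `C₁A*C₁ = A*`), `C₀BC₀ = B*` and the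
identity `(C₀G*C₁)* = C₁GC₀` make `JWJ` and `W*` agree entry by entry.
-/

open ContinuousLinearMap WithLp
open scoped InnerProduct InnerProductSpace

namespace IsConjugation

variable {H K : Type*} [NormedAddCommGroup H] [InnerProductSpace ℂ H]
  [NormedAddCommGroup K] [InnerProductSpace ℂ K] {C : H → H} {D : K → K}

theorem map_add (hC : IsConjugation C) (x y : H) : C (x + y) = C x + C y := hC.1 x y

theorem map_smul (hC : IsConjugation C) (a : ℂ) (x : H) : C (a • x) = starRingEnd ℂ a • C x :=
  hC.2.1 a x

theorem apply_apply (hC : IsConjugation C) (x : H) : C (C x) = x := hC.2.2.1 x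

theorem inner_map_map (hC : IsConjugation C) (x y : H) : ⟪C x, C y⟫_ℂ = ⟪y, x⟫_ℂ :=
  hC.2.2.2 x y

theorem inner_map_left (hC : IsConjugation C) (x y : H) : ⟪C x, y⟫_ℂ = ⟪C y, x⟫_ℂ := by
  rw [← hC.inner_map_map, hC.apply_apply]

theorem norm_map (hC : IsConjugation C) (x : H) : ‖C x‖ = ‖x‖ := by
  rw [@norm_eq_sqrt_re_inner ℂ, @norm_eq_sqrt_re_inner ℂ, hC.inner_map_map]

def conjugate (hC : IsConjugation C) (hD : IsConjugation D) (T : H →L[ℂ] K) : H →L[ℂ] K :=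
  LinearMap.mkContinuous
    { toFun := fun x => D (T (C x))
      map_add' := fun x y => by simp only [hC.map_add, T.map_add, hD.map_add]
      map_smul' := fun a x => by
        simp only [hC.map_smul, T.map_smul, hD.map_smul, RingHom.id_apply, Complex.conj_conj] }
    ‖T‖ fun x => by simpa only [LinearMap.coe_mk, AddHom.coe_mk, hD.norm_map, hC.norm_map]
      using T.le_opNorm (C x)

@[simp]
theorem conjugate_apply (hC : IsConjugation C) (hD : IsConjugation D) (T : H →L[ℂ] K) (x : H) :
    hC.conjugate hD T x = D (T (C x)) := rfl

theorem adjoint_conjugate [CompleteSpace H] [CompleteSpace K] (hC : IsConjugation C)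
    (hD : IsConjugation D) (T : H →L[ℂ] K) : (hC.conjugate hD T)† = hD.conjugate hC (T†) := by
  refine ((eq_adjoint_iff _ _).2 fun y x => ?_).symm
  calc ⟪C ((T†) (D y)), x⟫_ℂ = ⟪C x, (T†) (D y)⟫_ℂ := hC.inner_map_left _ _
    _ = ⟪T (C x), D y⟫_ℂ := adjoint_inner_right _ _ _
    _ = ⟪y, D (T (C x))⟫_ℂ := by rw [← hD.inner_map_map, hD.apply_apply]

theorem map_adjoint_map [CompleteSpace H] (hC : IsConjugation C) {A : H →L[ℂ] H}
    (hA : ∀ x, C (A (C x)) = A x) (x : H) : C ((A†) (C x)) = (A†) x := by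
  have hconj : hC.conjugate hC A = A := ContinuousLinearMap.ext hA
  rw [← conjugate_apply hC hC, ← adjoint_conjugate, hconj]

end IsConjugation

section BlockOperators

variable {E F G : Type*} [NormedAddCommGroup E] [InnerProductSpace ℂ E] [CompleteSpace E]
  [NormedAddCommGroup F] [InnerProductSpace ℂ F] [CompleteSpace F]
  [NormedAddCommGroup G] [InnerProductSpace ℂ G] [CompleteSpace G]

theorem adjoint_apply_of_upperTriangular
    {W : WithLp 2 (E × WithLp 2 (F × G)) →L[ℂ] WithLp 2 (E × WithLp 2 (F × G))}
    {P : E →L[ℂ] E} {Q : F →L[ℂ] E} {R : F →L[ℂ] F} {S : G →L[ℂ] F} {T : G →L[ℂ] G}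
    (hW : ∀ x y z, W (toLp 2 (x, toLp 2 (y, z))) = toLp 2 (P x + Q y, toLp 2 (R y + S z, T z)))
    (x : E) (y : F) (z : G) :
    (W†) (toLp 2 (x, toLp 2 (y, z))) =
      toLp 2 ((P†) x, toLp 2 ((Q†) x + (R†) y, (S†) y + (T†) z)) := by
  refine ext_inner_right ℂ fun v => ?_
  rcases v with ⟨a, ⟨b, c⟩⟩
  rw [adjoint_inner_left]
  simp only [hW, prod_inner_apply, inner_add_left, inner_add_right, adjoint_inner_left]
  ring

end BlockOperators

section Antidiagonal

variable {E F : Type*} [NormedAddCommGroup E] [InnerProductSpace ℂ E]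
  [NormedAddCommGroup F] [InnerProductSpace ℂ F]

def antidiagConj (C : E → E) (D : F → F) (u : WithLp 2 (E × WithLp 2 (F × E))) :
    WithLp 2 (E × WithLp 2 (F × E)) :=
  toLp 2 (C u.snd.snd, toLp 2 (D u.snd.fst, C u.fst))

theorem IsConjugation.antidiagConj {C : E → E} {D : F → F} (hC : IsConjugation C)
    (hD : IsConjugation D) : IsConjugation (antidiagConj C D) := by
  refine ⟨fun u v => ?_, fun a u => ?_, fun u => ?_, fun u v => ?_⟩
  · simp only [_root_.antidiagConj, add_fst, add_snd, hC.map_add, hD.map_add]; rfl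
  · simp only [_root_.antidiagConj, smul_fst, smul_snd, hC.map_smul, hD.map_smul]; rfl
  · simp only [_root_.antidiagConj, toLp_fst, toLp_snd, hC.apply_apply, hD.apply_apply]; rfl
  · simp only [_root_.antidiagConj, prod_inner_apply, ofLp_fst, ofLp_snd, hC.inner_map_map,
      hD.inner_map_map]
    ring

end Antidiagonal

theorem stmt_19_general {K₀ K₁ : Type*}
    [NormedAddCommGroup K₀] [InnerProductSpace ℂ K₀] [CompleteSpace K₀]
    [NormedAddCommGroup K₁] [InnerProductSpace ℂ K₁] [CompleteSpace K₁]
    (C₀ : K₀ → K₀) (hC₀ : IsConjugation C₀)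
    (C₁ : K₁ → K₁) (hC₁ : IsConjugation C₁)
    (A : K₁ →L[ℂ] K₁) (B : K₀ →L[ℂ] K₀) (G : K₀ →L[ℂ] K₁)
    (hB : ∀ y : K₀, C₀ (B (C₀ y)) = ContinuousLinearMap.adjoint B y)
    (hA : ∀ x : K₁, C₁ (A (C₁ x)) = A x)
    (W : WithLp 2 (K₁ × WithLp 2 (K₀ × K₁)) →L[ℂ] WithLp 2 (K₁ × WithLp 2 (K₀ × K₁)))
    (hW : ∀ (x : K₁) (y : K₀) (z : K₁),
      W ((WithLp.equiv 2 (K₁ × WithLp 2 (K₀ × K₁))).symm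
          (x, (WithLp.equiv 2 (K₀ × K₁)).symm (y, z))) =
        (WithLp.equiv 2 (K₁ × WithLp 2 (K₀ × K₁))).symm
          (ContinuousLinearMap.adjoint A x + G y,
            (WithLp.equiv 2 (K₀ × K₁)).symm
              (B y + C₀ (ContinuousLinearMap.adjoint G (C₁ z)), A z)))
    (J : WithLp 2 (K₁ × WithLp 2 (K₀ × K₁)) → WithLp 2 (K₁ × WithLp 2 (K₀ × K₁)))
    (hJ : ∀ (x : K₁) (y : K₀) (z : K₁),
      J ((WithLp.equiv 2 (K₁ × WithLp 2 (K₀ × K₁))).symm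
          (x, (WithLp.equiv 2 (K₀ × K₁)).symm (y, z))) =
        (WithLp.equiv 2 (K₁ × WithLp 2 (K₀ × K₁))).symm
          (C₁ z, (WithLp.equiv 2 (K₀ × K₁)).symm (C₀ y, C₁ x))) :
    IsConjugation J ∧ ∀ u, J (W (J u)) = ContinuousLinearMap.adjoint W u := by
  obtain rfl : J = antidiagConj C₁ C₀ := funext fun u => hJ u.fst u.snd.fst u.snd.snd
  have hW_block : ∀ x y z, W (toLp 2 (x, toLp 2 (y, z))) =
      toLp 2 ((A†) x + G y, toLp 2 (B y + hC₁.conjugate hC₀ (G†) z, A z)) := hW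
  refine ⟨hC₁.antidiagConj hC₀, fun u => ?_⟩
  rcases u with ⟨x, ⟨y, z⟩⟩
  rw [adjoint_apply_of_upperTriangular hW_block, IsConjugation.adjoint_conjugate]
  simp only [antidiagConj, hW_block, toLp_fst, toLp_snd, IsConjugation.conjugate_apply,
    adjoint_adjoint, hA, hC₀.map_add, hB, hC₀.apply_apply, hC₁.apply_apply, hC₁.map_add,
    hC₁.map_adjoint_map hA]
  rw [add_comm ((B†) y), add_comm (C₁ _)]

theorem stmt_19 {K₀ K₁ : Type*}
    [NormedAddCommGroup K₀] [InnerProductSpace ℂ K₀] [CompleteSpace K₀]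
    [NormedAddCommGroup K₁] [InnerProductSpace ℂ K₁] [CompleteSpace K₁]
    [FiniteDimensional ℂ K₀]
    (C₀ : K₀ → K₀) (hC₀ : IsConjugation C₀)
    (C₁ : K₁ → K₁) (hC₁ : IsConjugation C₁)
    (A : K₁ →L[ℂ] K₁) (B : K₀ →L[ℂ] K₀) (G : K₀ →L[ℂ] K₁)
    (hB : ∀ y : K₀, C₀ (B (C₀ y)) = ContinuousLinearMap.adjoint B y)
    (hA : ∀ x : K₁, C₁ (A (C₁ x)) = A x)
    (W : WithLp 2 (K₁ × WithLp 2 (K₀ × K₁)) →L[ℂ] WithLp 2 (K₁ × WithLp 2 (K₀ × K₁)))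
    (hW : ∀ (x : K₁) (y : K₀) (z : K₁),
      W ((WithLp.equiv 2 (K₁ × WithLp 2 (K₀ × K₁))).symm
          (x, (WithLp.equiv 2 (K₀ × K₁)).symm (y, z))) =
        (WithLp.equiv 2 (K₁ × WithLp 2 (K₀ × K₁))).symm
          (ContinuousLinearMap.adjoint A x + G y,
            (WithLp.equiv 2 (K₀ × K₁)).symm
              (B y + C₀ (ContinuousLinearMap.adjoint G (C₁ z)), A z)))
    (J : WithLp 2 (K₁ × WithLp 2 (K₀ × K₁)) → WithLp 2 (K₁ × WithLp 2 (K₀ × K₁)))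
    (hJ : ∀ (x : K₁) (y : K₀) (z : K₁),
      J ((WithLp.equiv 2 (K₁ × WithLp 2 (K₀ × K₁))).symm
          (x, (WithLp.equiv 2 (K₀ × K₁)).symm (y, z))) =
        (WithLp.equiv 2 (K₁ × WithLp 2 (K₀ × K₁))).symm
          (C₁ z, (WithLp.equiv 2 (K₀ × K₁)).symm (C₀ y, C₁ x))) :
    IsConjugation J ∧ ∀ u, J (W (J u)) = ContinuousLinearMap.adjoint W u :=
  stmt_19_general C₀ hC₀ C₁ hC₁ A B G hB hA W hW J hJ
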